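/- Let X = ∏_{i=1}^∞ {0,1} with the product σ-algebra, and for each i let μ_i be the measure on {0,1} with μ_i({0}) = 1/2 + γ_i and μ_i({1}) = 1/2 − γ_i, where |γ_i| < 1/2 and Σ_i |γ_i| < ∞. Let μ = ⊗_i μ_i and let M = ⊗_i ν_i where ν_i({0}) = ν_i({1}) = 1/2. Then μ and M are mutually absolutely continuous (equivalent measures). -/

import Mathlib

open MeasureTheory

/-- The cylinder set of sequences in `∏ {0,1}` agreeing with `s` on the first `n`
coordinates. -/
def cylEvent (s : ℕ → Bool) (n : ℕ) : Set (ℕ → Bool) := {x | ∀ i < n, x i = s i}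

/-- The weight of the `i`-th coordinate: `μ_i({0}) = 1/2 + γ_i`, `μ_i({1}) = 1/2 − γ_i`
(identifying `0 ↔ false`, `1 ↔ true`). -/
noncomputable def wt (γ : ℕ → ℝ) (i : ℕ) (b : Bool) : ℝ :=
  if b then 1/2 - γ i else 1/2 + γ i

/-!
The likelihood ratio of `μ` with respect to `M` is the infinite product
`f(x) = ∏ᵢ 2 μᵢ(xᵢ) = ∏ᵢ (1 ± 2γᵢ)`. It converges to a strictly positive limit because
`∑ᵢ log (1 ± 2γᵢ)` converges, and its partial products are bounded by `exp (2 ∑ᵢ |γᵢ|)`.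
Integrated against `M` over a cylinder of length `n`, every partial product of length
`m ≥ n` gives the `μ`-mass of the cylinder, so by dominated convergence `μ = f • M` on
cylinders, hence everywhere. Since `f > 0`, the two measures are equivalent.
-/

open Filter Topology

lemma measurableSet_cylEvent (s : ℕ → Bool) (n : ℕ) : MeasurableSet (cylEvent s n) := by
  simp only [cylEvent, Set.ofPred_forall]
  exact .iInter fun i => .iInter fun _ =>
    measurableSet_eq_fun (measurable_pi_apply i) measurable_const

@[simp]
lemma cylEvent_zero (s : ℕ → Bool) : cylEvent s 0 = Set.univ := by
  simp [cylEvent]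

lemma cylEvent_eq_of_mem {s x : ℕ → Bool} {n : ℕ} (hx : x ∈ cylEvent s n) :
    cylEvent x n = cylEvent s n := by
  ext y
  exact forall₂_congr fun i hi => by rw [hx i hi]

lemma cylEvent_inter_cylEvent (x : ℕ → Bool) (n m : ℕ) :
    cylEvent x n ∩ cylEvent x m = cylEvent x (max n m) := by
  ext y
  simp only [cylEvent, Set.mem_inter_iff, Set.mem_ofPred_eq, lt_max_iff, or_imp, forall_and]

def cylEvents : Set (Set (ℕ → Bool)) := {S | ∃ s n, cylEvent s n = S}

lemma isPiSystem_cylEvents : IsPiSystem cylEvents := by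
  rintro _ ⟨s, n, rfl⟩ _ ⟨t, m, rfl⟩ ⟨x, hxs, hxt⟩
  exact ⟨x, max n m, by
    rw [← cylEvent_eq_of_mem hxs, ← cylEvent_eq_of_mem hxt, cylEvent_inter_cylEvent]⟩

lemma measurableSet_generateFrom_cylEvents_coord (i : ℕ) (b : Bool) :
    MeasurableSet[MeasurableSpace.generateFrom cylEvents] {x : ℕ → Bool | x i = b} := by
  have hunion : {x : ℕ → Bool | x i = b} =
      ⋃ u : Fin i → Bool,
        cylEvent (fun j => if h : j < i then u ⟨j, h⟩ else b) (i + 1) := by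
    ext x
    simp only [cylEvent, Set.mem_ofPred_eq, Set.mem_iUnion]
    refine ⟨fun hx => ⟨fun j => x j, fun j hj => ?_⟩,
      fun ⟨u, hu⟩ => by simpa using hu i i.lt_succ_self⟩
    rcases Nat.lt_succ_iff_lt_or_eq.mp hj with hj | rfl
    · simp [hj]
    · simp [hx]
  rw [hunion]
  exact .iUnion fun u => MeasurableSpace.measurableSet_generateFrom ⟨_, _, rfl⟩

lemma generateFrom_cylEvents :
    MeasurableSpace.generateFrom cylEvents = MeasurableSpace.pi := by
  refine le_antisymm (MeasurableSpace.generateFrom_le ?_) ?_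
  · rintro _ ⟨s, n, rfl⟩
    exact measurableSet_cylEvent s n
  · exact iSup_le fun i => Measurable.comap_le <| @measurable_to_countable' _ _ _ _
      (MeasurableSpace.generateFrom _) _ (measurableSet_generateFrom_cylEvents_coord i)

lemma MeasureTheory.Measure.ext_of_cylEvent {μ ν : Measure (ℕ → Bool)} [IsFiniteMeasure μ]
    (h : ∀ s n, μ (cylEvent s n) = ν (cylEvent s n)) : μ = ν := by
  refine ext_of_generate_finite _ generateFrom_cylEvents.symm isPiSystem_cylEvents ?_ ?_
  · rintro _ ⟨s, n, rfl⟩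
    exact h s n
  · simpa using h default 0

lemma cylEvent_eq_union_update (s : ℕ → Bool) (n : ℕ) :
    cylEvent s n = cylEvent (Function.update s n false) (n + 1) ∪
      cylEvent (Function.update s n true) (n + 1) := by
  ext x
  simp only [cylEvent, Set.mem_union, Set.mem_ofPred_eq, Nat.lt_succ_iff_lt_or_eq, or_imp,
    forall_and, forall_eq, Function.update_self]
  have hupdate (b : Bool) : (∀ i < n, x i = Function.update s n b i) ↔ ∀ i < n, x i = s i :=
    forall₂_congr fun i hi => by rw [Function.update_of_ne hi.ne]
  simp only [hupdate]
  cases x n <;> simp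

lemma disjoint_cylEvent_update (s : ℕ → Bool) (n : ℕ) :
    Disjoint (cylEvent (Function.update s n false) (n + 1))
      (cylEvent (Function.update s n true) (n + 1)) := by
  refine Set.disjoint_left.mpr fun x hfalse htrue => ?_
  simpa using (hfalse n n.lt_succ_self).symm.trans (htrue n n.lt_succ_self)

lemma setLIntegral_cylEvent_eq_of_le {μ ν : Measure (ℕ → Bool)}
    {F : ℕ → (ℕ → Bool) → ENNReal}
    (hF : ∀ s m, ∀ x ∈ cylEvent s m, F m x = F m s)
    (hFν : ∀ s n, F n s * ν (cylEvent s n) = μ (cylEvent s n))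
    {n m : ℕ} (hnm : n ≤ m) (s : ℕ → Bool) :
    ∫⁻ x in cylEvent s n, F m x ∂ν = μ (cylEvent s n) := by
  obtain ⟨k, rfl⟩ := Nat.exists_eq_add_of_le hnm
  clear hnm
  induction k generalizing n s with
  | zero =>
    rw [setLIntegral_congr_fun (measurableSet_cylEvent s n) (hF s (n + 0)), setLIntegral_const]
    exact hFν s n
  | succ k ih =>
    rw [cylEvent_eq_union_update, lintegral_union (measurableSet_cylEvent _ _)
      (disjoint_cylEvent_update s n), measure_union (disjoint_cylEvent_update s n)
      (measurableSet_cylEvent _ _), ← add_assoc, add_right_comm, ih, ih]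

section Weights

variable {γ : ℕ → ℝ}

lemma wt_pos {i : ℕ} (hγi : |γ i| < 1/2) (b : Bool) : 0 < wt γ i b := by
  rcases abs_lt.mp hγi with ⟨h1, h2⟩
  cases b <;> simp only [wt, Bool.false_eq_true, if_true, if_false] <;> linarith

lemma abs_two_mul_wt_sub_one (i : ℕ) (b : Bool) : |2 * wt γ i b - 1| = 2 * |γ i| := by
  cases b <;> simp only [wt, Bool.false_eq_true, if_true, if_false] <;> ring_nf <;>
    simp [abs_mul]

lemma two_mul_wt_le_exp (i : ℕ) (b : Bool) : 2 * wt γ i b ≤ Real.exp (2 * |γ i|) := by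
  have := (abs_le.mp (abs_two_mul_wt_sub_one (γ := γ) i b).le).2
  linarith [Real.add_one_le_exp (2 * |γ i|)]

lemma summable_log_two_mul_wt (hsum : Summable fun i => |γ i|) (x : ℕ → Bool) :
    Summable fun i => Real.log (2 * wt γ i (x i)) := by
  have hdev : Summable fun i => 2 * wt γ i (x i) - 1 :=
    (hsum.mul_left 2).of_norm_bounded fun i => (abs_two_mul_wt_sub_one i (x i)).le
  simpa using Real.summable_log_one_add_of_summable hdev

lemma prod_two_mul_wt_le (hγ : ∀ i, |γ i| < 1/2) (hsum : Summable fun i => |γ i|)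
    (x : ℕ → Bool) (m : ℕ) :
    ∏ i ∈ Finset.range m, 2 * wt γ i (x i) ≤ Real.exp (2 * ∑' i, |γ i|) := calc
  _ ≤ ∏ i ∈ Finset.range m, Real.exp (2 * |γ i|) :=
    Finset.prod_le_prod (fun i _ => (mul_pos two_pos (wt_pos (hγ i) (x i))).le)
      fun i _ => two_mul_wt_le_exp i (x i)
  _ = Real.exp (2 * ∑ i ∈ Finset.range m, |γ i|) := by rw [← Real.exp_sum, Finset.mul_sum]
  _ ≤ Real.exp (2 * ∑' i, |γ i|) := by
    gcongr
    exact hsum.sum_le_tsum _ fun i _ => abs_nonneg (γ i)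

lemma measurable_prod_two_mul_wt (m : ℕ) :
    Measurable fun x : ℕ → Bool => ∏ i ∈ Finset.range m, 2 * wt γ i (x i) :=
  Finset.measurable_prod _ fun i _ =>
    measurable_const.mul (Measurable.comp (g := wt γ i) (measurable_of_countable _)
      (measurable_pi_apply i))

end Weights

section Density

noncomputable def prodDensity (γ : ℕ → ℝ) (x : ℕ → Bool) : ℝ := ∏' i, 2 * wt γ i (x i)

variable {γ : ℕ → ℝ} (hγ : ∀ i, |γ i| < 1/2) (hsum : Summable fun i => |γ i|)
include hγ hsum

lemma hasProd_prodDensity (x : ℕ → Bool) :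
    HasProd (fun i => 2 * wt γ i (x i)) (prodDensity γ x) :=
  (Real.multipliable_of_summable_log (fun i => mul_pos two_pos (wt_pos (hγ i) (x i)))
    (summable_log_two_mul_wt hsum x)).hasProd

lemma prodDensity_pos (x : ℕ → Bool) : 0 < prodDensity γ x := by
  rw [prodDensity, ← Real.rexp_tsum_eq_tprod (fun i => mul_pos two_pos (wt_pos (hγ i) (x i)))
    (summable_log_two_mul_wt hsum x)]
  exact Real.exp_pos _

lemma measurable_prodDensity : Measurable (prodDensity γ) :=
  measurable_of_tendsto_metrizable measurable_prod_two_mul_wt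
    (tendsto_pi_nhds.mpr fun x => (hasProd_prodDensity hγ hsum x).tendsto_prod_nat)

lemma setLIntegral_cylEvent_prodDensity {μ M : Measure (ℕ → Bool)} [IsFiniteMeasure M]
    (hμ : ∀ s n, μ (cylEvent s n) = ENNReal.ofReal (∏ i ∈ Finset.range n, wt γ i (s i)))
    (hM : ∀ s n, M (cylEvent s n) = ENNReal.ofReal (∏ _i ∈ Finset.range n, (1/2 : ℝ)))
    (s : ℕ → Bool) (n : ℕ) :
    ∫⁻ x in cylEvent s n, ENNReal.ofReal (prodDensity γ x) ∂M = μ (cylEvent s n) := by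
  set F : ℕ → (ℕ → Bool) → ENNReal :=
    fun m x => ENNReal.ofReal (∏ i ∈ Finset.range m, 2 * wt γ i (x i))
  have hlim : Tendsto (fun m => ∫⁻ x in cylEvent s n, F m x ∂M) atTop
      (𝓝 (∫⁻ x in cylEvent s n, ENNReal.ofReal (prodDensity γ x) ∂M)) :=
    tendsto_lintegral_of_dominated_convergence
      (fun _ => ENNReal.ofReal (Real.exp (2 * ∑' i, |γ i|)))
      (fun m => ENNReal.measurable_ofReal.comp (measurable_prod_two_mul_wt m))
      (fun m => ae_of_all _ fun x => ENNReal.ofReal_le_ofReal (prod_two_mul_wt_le hγ hsum x m))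
      (by simp [lintegral_const, ENNReal.mul_eq_top, measure_ne_top])
      (ae_of_all _ fun x => (ENNReal.continuous_ofReal.tendsto _).comp
        (hasProd_prodDensity hγ hsum x).tendsto_prod_nat)
  have hF (s : ℕ → Bool) (m : ℕ) : ∀ x ∈ cylEvent s m, F m x = F m s := fun x hx =>
    congrArg ENNReal.ofReal <| Finset.prod_congr rfl fun i hi => by
      rw [hx i (Finset.mem_range.mp hi)]
  have hFM (s : ℕ → Bool) (n : ℕ) : F n s * M (cylEvent s n) = μ (cylEvent s n) := by
    rw [hM, hμ, ← ENNReal.ofReal_mul (Finset.prod_nonneg fun i _ =>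
      (mul_pos two_pos (wt_pos (hγ i) (s i))).le), ← Finset.prod_mul_distrib]
    ring_nf
  refine tendsto_nhds_unique hlim (tendsto_const_nhds.congr' ?_)
  exact eventually_atTop.mpr ⟨n, fun m hm => (setLIntegral_cylEvent_eq_of_le hF hFM hm s).symm⟩

end Density

/-- Kakutani: if `|γ_i| < 1/2` for all `i` and `∑ |γ_i| < ∞`, then the product
measure `μ = ⊗ μ_i` with `μ_i({0}) = 1/2 + γ_i`, `μ_i({1}) = 1/2 − γ_i` and the
uniform Bernoulli product measure `M = ⊗ ν_i` with `ν_i({0}) = ν_i({1}) = 1/2`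
are mutually absolutely continuous. -/
theorem kakutani_product_measures_equivalent
    (γ : ℕ → ℝ) (hγ : ∀ i, |γ i| < 1/2) (hsum : Summable fun i => |γ i|)
    (μ M : Measure (ℕ → Bool))
    [IsProbabilityMeasure μ] [IsProbabilityMeasure M]
    (hμ : ∀ (s : ℕ → Bool) (n : ℕ),
      μ (cylEvent s n) = ENNReal.ofReal (∏ i ∈ Finset.range n, wt γ i (s i)))
    (hM : ∀ (s : ℕ → Bool) (n : ℕ),
      M (cylEvent s n) = ENNReal.ofReal (∏ _i ∈ Finset.range n, (1/2 : ℝ))) :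
    μ.AbsolutelyContinuous M ∧ M.AbsolutelyContinuous μ := by
  have hμ_eq : μ = M.withDensity fun x => ENNReal.ofReal (prodDensity γ x) :=
    Measure.ext_of_cylEvent fun s n => by
      rw [withDensity_apply _ (measurableSet_cylEvent s n),
        setLIntegral_cylEvent_prodDensity hγ hsum hμ hM]
  rw [hμ_eq]
  refine ⟨withDensity_absolutelyContinuous _ _, withDensity_absolutelyContinuous' ?_ ?_⟩
  · exact (ENNReal.measurable_ofReal.comp (measurable_prodDensity hγ hsum)).aemeasurable
  · exact ae_of_all _ fun x => (ENNReal.ofReal_pos.mpr (prodDensity_pos hγ hsum x)).ne'
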